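/- arXiv:2305.11356 — 3 statements merged into one kernel-verified Lean document; each statement's English description precedes it below -/
import Mathlib

section
/- Let v : R^d → R^d (d ≥ 2) be a polynomial vector field satisfying dev(∇v) = 0, i.e. ∇v(x) = (1/d)(div v(x)) I for all x. Then there exist a scalar a ∈ R and a constant vector b ∈ R^d such that v(x) = a x + b. -/
/-!
Off the diagonal `∇v` vanishes and its diagonal entries all agree. Since partial derivatives
commute, `∂ⱼ(∂ᵢvᵢ) = ∂ⱼ(∂ₖvₖ) = ∂ₖ(∂ⱼvₖ) = 0` for any `k ≠ j` (this is where `d ≥ 2` enters), so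
the common diagonal entry is a constant `a`, and `v - a x` has vanishing gradient.
-/

open MvPolynomial

namespace MvPolynomial

variable {σ R : Type*}

theorem pderiv_pderiv_comm [CommRing R] (i j : σ) (p : MvPolynomial σ R) :
    pderiv i (pderiv j p) = pderiv j (pderiv i p) := by
  classical
  suffices hlie : ⁅pderiv i, pderiv j⁆ = (0 : Derivation R (MvPolynomial σ R) _) by
    rw [← sub_eq_zero, ← Derivation.commutator_apply, hlie, Derivation.zero_apply]
  exact derivation_ext fun k => by
    simp [Derivation.commutator_apply, pderiv_X, Pi.single_apply, apply_ite]

theorem eq_of_pderiv_eq [CommRing R] [IsAddTorsionFree R] {p q : MvPolynomial σ R}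
    (hD : ∀ i, pderiv i p = pderiv i q) (hc : constantCoeff p = constantCoeff q) : p = q := by
  refine coe_injective σ R <| MvPowerSeries.pderiv.ext (fun i => ?_) ?_
  · rw [MvPowerSeries.pderiv_coe, MvPowerSeries.pderiv_coe, hD]
  · simpa [← MvPowerSeries.coeff_zero_eq_constantCoeff_apply, constantCoeff_eq] using hc

theorem exists_eq_C_mul_X_add_C_of_pderiv [CommRing R] [IsAddTorsionFree R] [Nontrivial σ]
    (v : σ → MvPolynomial σ R) (hoff : ∀ i j, i ≠ j → pderiv j (v i) = 0)
    (hdiag : ∀ i j, pderiv i (v i) = pderiv j (v j)) :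
    ∃ (a : R) (b : σ → R), ∀ i, v i = C a * X i + C (b i) := by
  obtain ⟨i₀⟩ : Nonempty σ := inferInstance
  have hdiv_const : ∀ i j, pderiv j (pderiv i (v i)) = 0 := fun i j => by
    obtain ⟨k, hk⟩ := exists_ne j
    rw [hdiag i k, pderiv_pderiv_comm, hoff k j hk, map_zero]
  set a := constantCoeff (pderiv i₀ (v i₀))
  have hdiag_C : ∀ i, pderiv i (v i) = C a := fun i =>
    eq_of_pderiv_eq (fun j => by rw [hdiv_const, pderiv_C]) (by rw [hdiag i i₀, constantCoeff_C])
  refine ⟨a, fun i => constantCoeff (v i), fun i => eq_of_pderiv_eq (fun j => ?_) (by simp)⟩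
  rcases eq_or_ne i j with rfl | hij
  · simp [hdiag_C]
  · simp [hoff i j hij, pderiv_X_of_ne hij]

end MvPolynomial

/-- A polynomial vector field `v` on `ℝ^d` (`d ≥ 2`) with `dev(∇v) = 0`,
i.e. `∂ⱼvᵢ = (1/d)(div v) δᵢⱼ` for all `i, j`, is of Raviart–Thomas form
`v(x) = a x + b`. -/
theorem dev_grad_zero_is_RT (d : ℕ) (hd : 2 ≤ d)
    (v : Fin d → MvPolynomial (Fin d) ℝ)
    (h : ∀ i j : Fin d, (d : ℝ) • pderiv j (v i)
      = if i = j then ∑ k : Fin d, pderiv k (v k) else 0) :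
    ∃ (a : ℝ) (b : Fin d → ℝ), ∀ (x : Fin d → ℝ) (i : Fin d),
      eval x (v i) = a * x i + b i := by
  have : Nontrivial (Fin d) := Fin.nontrivial_iff_two_le.mpr hd
  have hd0 : (d : ℝ) ≠ 0 := by positivity
  have hoff : ∀ i j, i ≠ j → pderiv j (v i) = 0 := fun i j hij =>
    (smul_eq_zero.mp ((h i j).trans (if_neg hij))).resolve_left hd0
  have hdiag : ∀ i j, pderiv i (v i) = pderiv j (v j) := fun i j =>
    smul_right_injective _ hd0 <| by simp only [h, if_pos]
  obtain ⟨a, b, hv⟩ := exists_eq_C_mul_X_add_C_of_pderiv v hoff hdiag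
  exact ⟨a, b, fun x i => by simp [hv]⟩
end

section
/- Let T be a nondegenerate d-simplex in R^d with faces F₀,…,F_d and outward unit normals n₀,…,n_d. Let A be a d×d matrix with tr A = 0 such that for each face Fᵢ the function x ↦ (A x)·nᵢ is constant on Fᵢ. Then A = 0. -/
open Matrix

/-!
The condition says that `Aᵀ nᵢ` is orthogonal to the facet `Fᵢ`, whose edges span a hyperplane,
so `Aᵀ nᵢ = cᵢ nᵢ`: every facet normal is a left eigenvector of `A`. Any `d` of the normals form a
basis, and the remaining one is a combination of them with nonzero coefficients (pair the expansion
with the edges at the vertex opposite its facet), so all `cᵢ` agree. Hence `A` is a scalar matrix,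
and `tr A = 0` forces `A = 0`.
-/

open Submodule Set

section DotProduct

variable {K ι κ : Type*} [Field K] [Fintype κ]

theorem sum_smul_dotProduct_of_dotProduct_eq_zero [Fintype ι] {x y : ι → κ → K}
    (hoff : ∀ i j, i ≠ j → x i ⬝ᵥ y j = 0) (a : ι → K) (j : ι) :
    (∑ i, a i • x i) ⬝ᵥ y j = a j * (x j ⬝ᵥ y j) := by
  rw [sum_dotProduct, Finset.sum_eq_single j (fun i _ hij => by rw [smul_dotProduct, hoff i j hij,
    smul_zero]) (by simp), smul_dotProduct, smul_eq_mul]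

theorem linearIndependent_of_dotProduct_eq_zero [Fintype ι] {x y : ι → κ → K}
    (hoff : ∀ i j, i ≠ j → x i ⬝ᵥ y j = 0) (hdiag : ∀ i, x i ⬝ᵥ y i ≠ 0) :
    LinearIndependent K x := by
  refine Fintype.linearIndependent_iff.mpr fun a ha j => ?_
  have := sum_smul_dotProduct_of_dotProduct_eq_zero hoff a j
  rw [ha, zero_dotProduct] at this
  exact (mul_eq_zero.mp this.symm).resolve_right (hdiag j)

theorem eq_zero_of_dotProduct_eq_zero {e : ι → κ → K} (he : span K (range e) = ⊤) {z : κ → K}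
    (hz : ∀ i, z ⬝ᵥ e i = 0) : z = 0 := by
  have : dotProductBilin K K z = 0 := LinearMap.ext_on_range he hz
  exact dotProduct_eq_zero z fun w => LinearMap.congr_fun this w

theorem exists_eq_smul_of_dotProduct_eq_zero {e : ι → κ → K} (he : span K (range e) = ⊤)
    {i₀ : ι} {x y : κ → K} (hx : ∀ i, i ≠ i₀ → x ⬝ᵥ e i = 0) (hy : ∀ i, i ≠ i₀ → y ⬝ᵥ e i = 0)
    (hy₀ : y ⬝ᵥ e i₀ ≠ 0) : ∃ c : K, x = c • y := by
  refine ⟨(x ⬝ᵥ e i₀) / (y ⬝ᵥ e i₀), sub_eq_zero.mp (eq_zero_of_dotProduct_eq_zero he fun i => ?_)⟩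
  rw [sub_dotProduct, smul_dotProduct, smul_eq_mul]
  by_cases hi : i = i₀
  · rw [hi, div_mul_cancel₀ _ hy₀, sub_self]
  · rw [hx i hi, hy i hi, mul_zero, sub_zero]

theorem eq_smul_one_of_vecMul_eq_smul [DecidableEq κ] {u : ι → κ → K}
    (hu : span K (range u) = ⊤) {A : Matrix κ κ K} {c : K} (h : ∀ i, u i ᵥ* A = c • u i) :
    A = c • 1 := by
  have hlin : A.vecMulLinear = c • LinearMap.id := LinearMap.ext_on_range hu (by simpa using h)
  ext i j
  simpa [Pi.single_apply, one_apply, eq_comm] using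
    congr_fun (LinearMap.congr_fun hlin (Pi.single i 1)) j

end DotProduct

theorem Module.End.eigenvalue_eq_of_sum_smul {K M ι : Type*} [Field K] [AddCommGroup M]
    [Module K M] [Fintype ι] {f : Module.End K M} {u : ι → M} (hu : LinearIndependent K u)
    {c : ι → K} (hfu : ∀ i, f (u i) = c i • u i) {a : ι → K} {c₀ : K}
    (hf : f (∑ i, a i • u i) = c₀ • ∑ i, a i • u i) {i : ι} (ha : a i ≠ 0) : c i = c₀ := by
  have hsum : ∑ j, (a j * c j) • u j = ∑ j, (a j * c₀) • u j := by
    simpa only [map_sum, map_smul, hfu, Finset.smul_sum, smul_smul, mul_comm c₀] using hf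
  have hcoef := Fintype.linearIndependent_iff.mp hu (fun j => a j * (c j - c₀))
    (by simp only [mul_sub, sub_smul, Finset.sum_sub_distrib, hsum, sub_self]) i
  exact sub_eq_zero.mp ((mul_eq_zero.mp hcoef).resolve_left ha)

section Simplex

variable {d : ℕ} {v n : Fin (d + 1) → Fin d → ℝ}

theorem normal_dotProduct_edge_eq_zero
    (horth : ∀ i, ∀ j k, j ≠ i → k ≠ i → n i ⬝ᵥ (v j - v k) = 0) (k : Fin (d + 1)) {i j : Fin d}
    (hij : i ≠ j) : n (k.succAbove i) ⬝ᵥ (v (k.succAbove j) - v k) = 0 :=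
  horth _ _ _ (Fin.succAbove_right_injective.ne hij.symm) (Fin.succAbove_ne k i).symm

theorem normal_dotProduct_edge_ne_zero (hout : ∀ i j, j ≠ i → n i ⬝ᵥ (v i - v j) < 0)
    (k : Fin (d + 1)) (i : Fin d) : n (k.succAbove i) ⬝ᵥ (v (k.succAbove i) - v k) ≠ 0 :=
  (hout _ _ (Fin.succAbove_ne k i).symm).ne

theorem linearIndependent_normals
    (horth : ∀ i, ∀ j k, j ≠ i → k ≠ i → n i ⬝ᵥ (v j - v k) = 0)
    (hout : ∀ i j, j ≠ i → n i ⬝ᵥ (v i - v j) < 0) (k : Fin (d + 1)) :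
    LinearIndependent ℝ fun i => n (k.succAbove i) :=
  linearIndependent_of_dotProduct_eq_zero (fun _ _ => normal_dotProduct_edge_eq_zero horth k)
    (normal_dotProduct_edge_ne_zero hout k)

theorem span_normals_eq_top
    (horth : ∀ i, ∀ j k, j ≠ i → k ≠ i → n i ⬝ᵥ (v j - v k) = 0)
    (hout : ∀ i j, j ≠ i → n i ⬝ᵥ (v i - v j) < 0) (k : Fin (d + 1)) :
    span ℝ (range fun i => n (k.succAbove i)) = ⊤ :=
  (linearIndependent_normals horth hout k).span_eq_top_of_card_eq_finrank' (by simp)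

theorem span_edges_eq_top
    (horth : ∀ i, ∀ j k, j ≠ i → k ≠ i → n i ⬝ᵥ (v j - v k) = 0)
    (hout : ∀ i j, j ≠ i → n i ⬝ᵥ (v i - v j) < 0) (k : Fin (d + 1)) :
    span ℝ (range fun i => v (k.succAbove i) - v k) = ⊤ :=
  (linearIndependent_of_dotProduct_eq_zero
    (fun _ _ hij => by rw [dotProduct_comm, normal_dotProduct_edge_eq_zero horth k hij.symm])
    (fun i => by rw [dotProduct_comm]; exact normal_dotProduct_edge_ne_zero hout k i)
    ).span_eq_top_of_card_eq_finrank' (by simp)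

theorem exists_vecMul_normal_eq_smul
    (horth : ∀ i, ∀ j k, j ≠ i → k ≠ i → n i ⬝ᵥ (v j - v k) = 0)
    (hout : ∀ i j, j ≠ i → n i ⬝ᵥ (v i - v j) < 0) (hd : 1 ≤ d) {A : Matrix (Fin d) (Fin d) ℝ}
    (hconst : ∀ i, ∀ j k, j ≠ i → k ≠ i → A *ᵥ v j ⬝ᵥ n i = A *ᵥ v k ⬝ᵥ n i)
    (i : Fin (d + 1)) : ∃ c : ℝ, n i ᵥ* A = c • n i := by
  have : Nontrivial (Fin (d + 1)) := Fin.nontrivial_iff_two_le.mpr (by omega)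
  obtain ⟨k, hki⟩ := exists_ne i
  obtain ⟨i₀, rfl⟩ := Fin.exists_succAbove_eq hki.symm
  refine exists_eq_smul_of_dotProduct_eq_zero (span_edges_eq_top horth hout k) (fun j hj => ?_)
    (fun j hj => normal_dotProduct_edge_eq_zero horth k hj.symm)
    (normal_dotProduct_edge_ne_zero hout k i₀)
  rw [← dotProduct_mulVec, mulVec_sub, dotProduct_sub, dotProduct_comm, dotProduct_comm (n _),
    hconst _ _ _ (Fin.succAbove_right_injective.ne hj) hki, sub_self]

theorem exists_normal_eq_sum_smul
    (horth : ∀ i, ∀ j k, j ≠ i → k ≠ i → n i ⬝ᵥ (v j - v k) = 0)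
    (hout : ∀ i j, j ≠ i → n i ⬝ᵥ (v i - v j) < 0) (k : Fin (d + 1)) :
    ∃ a : Fin d → ℝ, (∀ i, a i ≠ 0) ∧ ∑ i, a i • n (k.succAbove i) = n k := by
  obtain ⟨a, ha⟩ := (mem_span_range_iff_exists_fun ℝ).mp
    (by rw [span_normals_eq_top horth hout k]; exact mem_top : n k ∈ _)
  refine ⟨a, fun i hai => ?_, ha⟩
  have hpair := sum_smul_dotProduct_of_dotProduct_eq_zero
    (fun _ _ => normal_dotProduct_edge_eq_zero horth k) a i
  rw [ha, hai, zero_mul, ← neg_sub, dotProduct_neg, neg_eq_zero] at hpair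
  exact (hout k _ (Fin.succAbove_ne k i)).ne hpair

end Simplex

theorem traceless_constant_normal_flux_zero_general (d : ℕ) (hd : 1 ≤ d)
    (v : Fin (d + 1) → (Fin d → ℝ))
    (n : Fin (d + 1) → (Fin d → ℝ))
    (horth : ∀ i, ∀ j k, j ≠ i → k ≠ i → n i ⬝ᵥ (v j - v k) = 0)
    (hout : ∀ i j, j ≠ i → n i ⬝ᵥ (v i - v j) < 0)
    (A : Matrix (Fin d) (Fin d) ℝ) (htr : A.trace = 0)
    (hconst : ∀ i, ∀ j k, j ≠ i → k ≠ i →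
      A.mulVec (v j) ⬝ᵥ n i = A.mulVec (v k) ⬝ᵥ n i) :
    A = 0 := by
  choose c hc using exists_vecMul_normal_eq_smul horth hout hd hconst
  obtain ⟨a, ha, hsum⟩ := exists_normal_eq_sum_smul horth hout 0
  have hc_eq : ∀ i, c (Fin.succAbove 0 i) = c 0 := fun i =>
    Module.End.eigenvalue_eq_of_sum_smul (f := A.vecMulLinear)
      (linearIndependent_normals horth hout 0) (fun _ => hc _) (by rw [hsum]; exact hc 0) (ha i)
  have hA : A = c 0 • 1 := eq_smul_one_of_vecMul_eq_smul (span_normals_eq_top horth hout 0)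
    fun i => by rw [hc, hc_eq]
  have hc0 : c 0 = 0 := by
    rw [hA, trace_smul, trace_one, Fintype.card_fin, smul_eq_mul] at htr
    exact (mul_eq_zero.mp htr).resolve_right (by positivity)
  rw [hA, hc0, zero_smul]

/-- Let `T` be a nondegenerate `d`-simplex with vertices `v₀, …, v_d` and, for each `i`,
outward unit normal `n i` to the facet `Fᵢ` opposite to vertex `i`. If `A` is a trace-free
`d×d` matrix such that `x ↦ (A x)·nᵢ` is constant on `Fᵢ` for every `i`, then `A = 0`. -/
theorem traceless_constant_normal_flux_zero (d : ℕ) (hd : 1 ≤ d)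
    (v : Fin (d + 1) → (Fin d → ℝ)) (hv : AffineIndependent ℝ v)
    (n : Fin (d + 1) → (Fin d → ℝ))
    (hunit : ∀ i, n i ⬝ᵥ n i = 1)
    (horth : ∀ i, ∀ j k, j ≠ i → k ≠ i → n i ⬝ᵥ (v j - v k) = 0)
    (hout : ∀ i j, j ≠ i → n i ⬝ᵥ (v i - v j) < 0)
    (A : Matrix (Fin d) (Fin d) ℝ) (htr : A.trace = 0)
    (hconst : ∀ i, ∀ j k, j ≠ i → k ≠ i →
      A.mulVec (v j) ⬝ᵥ n i = A.mulVec (v k) ⬝ᵥ n i) :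
    A = 0 :=
  traceless_constant_normal_flux_zero_general d hd v n horth hout A htr hconst
end

section
/- The sum P₁(R^d; S) + sym(x ⊗ H₁(R^d; R^d)) + x x^T H₁(R^d) is direct, and its dimension equals (1/2)·d·(d+1)·(d+3). -/
open Matrix

/-- Matrix-valued fields on `ℝ^d`. -/
abbrev MatField (d : ℕ) := (Fin d → ℝ) → Matrix (Fin d) (Fin d) ℝ

/-- `P₁(ℝ^d; S)`: symmetric-matrix-valued polynomials of degree at most 1. -/
def P1SymSet (d : ℕ) : Set (MatField d) :=
  {τ | (∀ x, (τ x).IsSymm) ∧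
    ∃ (A : Matrix (Fin d) (Fin d) ℝ) (B : Fin d → Matrix (Fin d) (Fin d) ℝ),
      ∀ x, τ x = A + ∑ i : Fin d, x i • B i}

/-- `sym(x ⊗ H₁(ℝ^d; ℝ^d))`: symmetrized tensors `x ⊗ q(x)` with `q` homogeneous linear. -/
def symXH1Set (d : ℕ) : Set (MatField d) :=
  {τ | ∃ M : Matrix (Fin d) (Fin d) ℝ,
    ∀ x, τ x = Matrix.of fun i j =>
      (x i * M.mulVec x j + M.mulVec x i * x j) / 2}

/-- `x xᵀ H₁(ℝ^d)`: fields `x ↦ x xᵀ ℓ(x)` with `ℓ` homogeneous linear. -/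
def xxTH1Set (d : ℕ) : Set (MatField d) :=
  {τ | ∃ l : Fin d → ℝ, ∀ x, τ x = Matrix.of fun i j => x i * x j * (l ⬝ᵥ x)}

/-!
A field of `P₁(ℝ^d;S)` is the sum of a constant and a linear field, while the fields of
`sym(x ⊗ H₁)` and of `x xᵀ H₁` are homogeneous of degrees 2 and 3. Along a line `t ↦ t • x` a
relation between the four parts becomes a cubic polynomial in `t` vanishing identically, so the sum
is direct. Each summand is the injective image of a parameter space, of dimensions
`(d + 1) · d(d + 1)/2`, `d²` and `d`, and these add up to `d(d + 1)(d + 3)/2`.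
-/

theorem LinearMap.span_range_eq_range {R M N : Type*} [Semiring R] [AddCommMonoid M]
    [Module R M] [AddCommMonoid N] [Module R N] (f : M →ₗ[R] N) :
    Submodule.span R (Set.range f) = LinearMap.range f := by
  rw [← LinearMap.coe_range, Submodule.span_eq]

theorem Submodule.finrank_sup_of_disjoint {K V : Type*} [DivisionRing K] [AddCommGroup V]
    [Module K V] {s t : Submodule K V} [FiniteDimensional K s] [FiniteDimensional K t]
    (h : Disjoint s t) : Module.finrank K ↥(s ⊔ t) = Module.finrank K s + Module.finrank K t := by
  rw [← Submodule.finrank_sup_add_finrank_inf_eq, disjoint_iff.mp h, finrank_bot, add_zero]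

section Homogeneous

variable (𝕜 E F : Type*)

def homogeneousFunctions [CommSemiring 𝕜] [AddCommMonoid E] [Module 𝕜 E] [AddCommMonoid F]
    [Module 𝕜 F] (k : ℕ) : Submodule 𝕜 (E → F) where
  carrier := {f | ∀ (t : 𝕜) x, f (t • x) = t ^ k • f x}
  add_mem' hf hg t x := by simp only [Pi.add_apply, hf t x, hg t x, smul_add]
  zero_mem' t x := by simp
  smul_mem' c f hf t x := by simp only [Pi.smul_apply, hf t x, smul_comm c]

variable {𝕜 E F} [Field 𝕜] [CharZero 𝕜] [AddCommGroup E] [Module 𝕜 E] [AddCommGroup F]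
  [Module 𝕜 F]

theorem eq_zero_of_homogeneous_add_add_add_eq_zero {f₀ f₁ f₂ f₃ : E → F}
    (h₀ : f₀ ∈ homogeneousFunctions 𝕜 E F 0) (h₁ : f₁ ∈ homogeneousFunctions 𝕜 E F 1)
    (h₂ : f₂ ∈ homogeneousFunctions 𝕜 E F 2) (h₃ : f₃ ∈ homogeneousFunctions 𝕜 E F 3)
    (h : f₀ + f₁ + f₂ + f₃ = 0) : f₀ = 0 ∧ f₁ = 0 ∧ f₂ = 0 ∧ f₃ = 0 := by
  have line (t : 𝕜) (x : E) : f₀ x + t • f₁ x + t ^ 2 • f₂ x + t ^ 3 • f₃ x = 0 := by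
    simpa only [Pi.add_apply, Pi.zero_apply, h₀ t x, h₁ t x, h₂ t x, h₃ t x, pow_zero, pow_one,
      one_smul] using congrFun h (t • x)
  have e₀ x : f₀ x = 0 := by simpa using line 0 x
  have e₂ x : f₂ x = 0 := by
    linear_combination (norm := module) (2⁻¹ : 𝕜) • (line 1 x + line (-1) x - (2 : 𝕜) • e₀ x)
  have e₃ x : f₃ x = 0 := by
    linear_combination (norm := module)
      (6⁻¹ : 𝕜) • (line 2 x - (2 : 𝕜) • line 1 x + e₀ x - (2 : 𝕜) • e₂ x)
  have e₁ x : f₁ x = 0 := by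
    linear_combination (norm := module) line 1 x - e₀ x - e₂ x - e₃ x
  exact ⟨funext e₀, funext e₁, funext e₂, funext e₃⟩

theorem disjoint_homogeneousFunctions_zero_one_two_three :
    Disjoint (homogeneousFunctions 𝕜 E F 0 ⊔ homogeneousFunctions 𝕜 E F 1)
      (homogeneousFunctions 𝕜 E F 2 ⊔ homogeneousFunctions 𝕜 E F 3) := by
  rw [Submodule.disjoint_def]
  intro f hlow hhigh
  obtain ⟨f₀, h₀, f₁, h₁, rfl⟩ := Submodule.mem_sup.mp hlow
  obtain ⟨f₂, h₂, f₃, h₃, hf⟩ := Submodule.mem_sup.mp hhigh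
  obtain ⟨rfl, rfl, -⟩ := eq_zero_of_homogeneous_add_add_add_eq_zero h₀ h₁ (neg_mem h₂)
    (neg_mem h₃) (by rw [← hf]; abel)
  exact zero_add 0

theorem disjoint_homogeneousFunctions_two_three :
    Disjoint (homogeneousFunctions 𝕜 E F 2) (homogeneousFunctions 𝕜 E F 3) := by
  rw [Submodule.disjoint_def]
  intro f h₂ h₃
  exact (eq_zero_of_homogeneous_add_add_add_eq_zero (zero_mem _) (zero_mem _) h₂ (neg_mem h₃)
    (by simp)).2.2.1

end Homogeneous

section Sym2Matrix

variable {n R : Type*} [CommSemiring R]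

def sym2ToMatrix : (Sym2 n → R) →ₗ[R] Matrix n n R where
  toFun f := Matrix.of fun i j => f s(i, j)
  map_add' _ _ := rfl
  map_smul' _ _ := rfl

@[simp]
theorem sym2ToMatrix_apply (f : Sym2 n → R) (i j : n) : sym2ToMatrix f i j = f s(i, j) := rfl

theorem sym2ToMatrix_injective : Function.Injective (sym2ToMatrix : (Sym2 n → R) → _) := by
  intro f g h
  funext z
  induction z using Sym2.ind with
  | _ i j => simpa using congrFun₂ h i j

theorem isSymm_sym2ToMatrix (f : Sym2 n → R) : (sym2ToMatrix f).IsSymm :=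
  Matrix.IsSymm.ext fun i j => by simp [Sym2.eq_swap]

theorem exists_sym2ToMatrix_eq {A : Matrix n n R} (hA : A.IsSymm) : ∃ f, sym2ToMatrix f = A :=
  ⟨Sym2.lift ⟨fun i j => A i j, fun i j => hA.apply j i⟩, by ext i j; simp⟩

end Sym2Matrix

section Fields

variable {d : ℕ}

def affineSymField : (Sym2 (Fin d) → ℝ) × (Fin d → Sym2 (Fin d) → ℝ) →ₗ[ℝ] MatField d :=
  LinearMap.pi fun x => sym2ToMatrix ∘ₗ LinearMap.fst _ _ _ +
    ∑ i, x i • (sym2ToMatrix ∘ₗ LinearMap.proj i ∘ₗ LinearMap.snd _ _ _)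

theorem affineSymField_apply (p : (Sym2 (Fin d) → ℝ) × (Fin d → Sym2 (Fin d) → ℝ))
    (x : Fin d → ℝ) : affineSymField p x = sym2ToMatrix p.1 + ∑ i, x i • sym2ToMatrix (p.2 i) := by
  simp [affineSymField]

noncomputable def symOuterField : Matrix (Fin d) (Fin d) ℝ →ₗ[ℝ] MatField d where
  toFun M x := Matrix.of fun i j => (x i * (M *ᵥ x) j + (M *ᵥ x) i * x j) / 2
  map_add' M N := by
    funext x; ext i j
    simp only [Matrix.add_mulVec, Pi.add_apply, Matrix.of_apply, Matrix.add_apply]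
    ring
  map_smul' c M := by
    funext x; ext i j
    simp only [Matrix.smul_mulVec, Pi.smul_apply, Matrix.of_apply, Matrix.smul_apply,
      smul_eq_mul, RingHom.id_apply]
    ring

def cubicField : (Fin d → ℝ) →ₗ[ℝ] MatField d where
  toFun l x := Matrix.of fun i j => x i * x j * (l ⬝ᵥ x)
  map_add' l m := by
    funext x; ext i j
    simp only [add_dotProduct, Pi.add_apply, Matrix.of_apply, Matrix.add_apply]
    ring
  map_smul' c l := by
    funext x; ext i j
    simp only [smul_dotProduct, Pi.smul_apply, Matrix.of_apply, Matrix.smul_apply,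
      smul_eq_mul, RingHom.id_apply]
    ring

theorem P1SymSet_eq_range : P1SymSet d = Set.range affineSymField := by
  ext τ
  constructor
  · rintro ⟨hsym, A, B, hτ⟩
    have hA : A = τ 0 := by simp [hτ 0]
    have hB i : B i = τ (Pi.single i 1) - τ 0 := by simp [hτ, Pi.single_apply]
    obtain ⟨f, hf⟩ := exists_sym2ToMatrix_eq (hA ▸ hsym 0)
    choose g hg using fun i => exists_sym2ToMatrix_eq ((hB i) ▸ (hsym _).sub (hsym 0))
    exact ⟨(f, g), funext fun x => by simp [affineSymField_apply, hf, hg, hτ]⟩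
  · rintro ⟨p, rfl⟩
    refine ⟨fun x => ?_, _, _, affineSymField_apply p⟩
    simp only [affineSymField_apply, Matrix.IsSymm, Matrix.transpose_add, Matrix.transpose_sum,
      Matrix.transpose_smul, (isSymm_sym2ToMatrix _).eq]

theorem symXH1Set_eq_range : symXH1Set d = Set.range symOuterField := by
  ext τ
  exact ⟨fun ⟨M, hM⟩ => ⟨M, (funext hM).symm⟩, fun ⟨M, hM⟩ => ⟨M, fun x => hM ▸ rfl⟩⟩

theorem xxTH1Set_eq_range : xxTH1Set d = Set.range cubicField := by
  ext τ
  exact ⟨fun ⟨l, hl⟩ => ⟨l, (funext hl).symm⟩, fun ⟨l, hl⟩ => ⟨l, fun x => hl ▸ rfl⟩⟩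

theorem range_affineSymField_le :
    LinearMap.range (affineSymField (d := d)) ≤
      homogeneousFunctions ℝ _ _ 0 ⊔ homogeneousFunctions ℝ _ _ 1 := by
  rintro _ ⟨p, rfl⟩
  refine Submodule.mem_sup.mpr ⟨fun _ => sym2ToMatrix p.1, fun t x => by simp,
    fun x => ∑ i, x i • sym2ToMatrix (p.2 i), fun t x => ?_,
    funext fun x => (affineSymField_apply p x).symm⟩
  simp [Finset.smul_sum, mul_smul]

theorem range_symOuterField_le :
    LinearMap.range (symOuterField (d := d)) ≤ homogeneousFunctions ℝ _ _ 2 := by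
  rintro _ ⟨M, rfl⟩ t x
  ext i j
  simp only [symOuterField, LinearMap.coe_mk, AddHom.coe_mk, Matrix.mulVec_smul, Pi.smul_apply,
    Matrix.of_apply, Matrix.smul_apply, smul_eq_mul]
  ring

theorem range_cubicField_le :
    LinearMap.range (cubicField (d := d)) ≤ homogeneousFunctions ℝ _ _ 3 := by
  rintro _ ⟨l, rfl⟩ t x
  ext i j
  simp only [cubicField, LinearMap.coe_mk, AddHom.coe_mk, dotProduct_smul, Pi.smul_apply,
    Matrix.of_apply, Matrix.smul_apply, smul_eq_mul]
  ring

theorem affineSymField_injective : Function.Injective (affineSymField (d := d)) := by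
  rw [← LinearMap.ker_eq_bot, LinearMap.ker_eq_bot']
  rintro ⟨a, b⟩ h
  have ha : sym2ToMatrix a = 0 := by simpa [affineSymField_apply] using congrFun h 0
  have hb i : sym2ToMatrix (b i) = 0 := by
    simpa [affineSymField_apply, ha, Pi.single_apply] using congrFun h (Pi.single i 1)
  ext1
  · exact sym2ToMatrix_injective (ha.trans (map_zero _).symm)
  · exact funext fun i => sym2ToMatrix_injective ((hb i).trans (map_zero _).symm)

theorem symOuterField_injective : Function.Injective (symOuterField (d := d)) := by
  rw [← LinearMap.ker_eq_bot, LinearMap.ker_eq_bot']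
  intro M h
  ext i k
  have hik := congrFun₂ (congrFun h (Pi.single k 1)) i k
  by_cases hik' : i = k
  · subst hik'
    simpa [symOuterField, Matrix.mulVec_single_one] using hik
  · simpa [symOuterField, Matrix.mulVec_single_one, hik'] using hik

theorem cubicField_injective : Function.Injective (cubicField (d := d)) := by
  rw [← LinearMap.ker_eq_bot, LinearMap.ker_eq_bot']
  intro l h
  funext k
  simpa [cubicField] using congrFun₂ (congrFun h (Pi.single k 1)) k k

end Fields

theorem choose_two_mul_add (d : ℕ) :
    (d + 1).choose 2 * (d + 1) + d * d + d = d * (d + 1) * (d + 3) / 2 := by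
  have h : 2 * (d + 1).choose 2 = d * (d + 1) := by
    rw [Nat.choose_two_right, add_tsub_cancel_right, mul_comm (d + 1),
      Nat.mul_div_cancel' (Nat.even_mul_succ_self d).two_dvd]
  refine (Nat.div_eq_of_eq_mul_left two_pos ?_).symm
  linear_combination (d + 1) * h.symm

theorem sigma1pp_direct_sum_dim_general (d : ℕ) :
    (Submodule.span ℝ (P1SymSet d)
        ⊓ (Submodule.span ℝ (symXH1Set d) ⊔ Submodule.span ℝ (xxTH1Set d)) = ⊥) ∧
    (Submodule.span ℝ (symXH1Set d) ⊓ Submodule.span ℝ (xxTH1Set d) = ⊥) ∧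
    Module.finrank ℝ
        ↥(Submodule.span ℝ (P1SymSet d) ⊔ Submodule.span ℝ (symXH1Set d)
          ⊔ Submodule.span ℝ (xxTH1Set d))
      = d * (d + 1) * (d + 3) / 2 := by
  rw [P1SymSet_eq_range, symXH1Set_eq_range, xxTH1Set_eq_range, LinearMap.span_range_eq_range,
    LinearMap.span_range_eq_range, LinearMap.span_range_eq_range]
  have h₂₃ : Disjoint (LinearMap.range symOuterField) (LinearMap.range (cubicField (d := d))) :=
    disjoint_homogeneousFunctions_two_three.mono range_symOuterField_le range_cubicField_le
  have h₁₂₃ : Disjoint (LinearMap.range affineSymField)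
      (LinearMap.range symOuterField ⊔ LinearMap.range (cubicField (d := d))) :=
    disjoint_homogeneousFunctions_zero_one_two_three.mono range_affineSymField_le
      (sup_le_sup range_symOuterField_le range_cubicField_le)
  refine ⟨disjoint_iff.mp h₁₂₃, disjoint_iff.mp h₂₃, ?_⟩
  rw [sup_assoc, Submodule.finrank_sup_of_disjoint h₁₂₃, Submodule.finrank_sup_of_disjoint h₂₃,
    LinearMap.finrank_range_of_inj affineSymField_injective,
    LinearMap.finrank_range_of_inj symOuterField_injective,
    LinearMap.finrank_range_of_inj cubicField_injective]
  simp only [Module.finrank_prod, Module.finrank_pi, Module.finrank_pi_fintype,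
    Module.finrank_matrix, Module.finrank_self, Sym2.card, Fintype.card_fin, Finset.sum_const,
    Finset.card_univ, smul_eq_mul, ← choose_two_mul_add]
  ring

/-- The sum `P₁(ℝ^d;S) + sym(x⊗H₁(ℝ^d;ℝ^d)) + x xᵀ H₁(ℝ^d)` is direct and has
dimension `½ d(d+1)(d+3)`. -/
theorem sigma1pp_direct_sum_dim (d : ℕ) (hd : 1 ≤ d) :
    (Submodule.span ℝ (P1SymSet d)
        ⊓ (Submodule.span ℝ (symXH1Set d) ⊔ Submodule.span ℝ (xxTH1Set d)) = ⊥) ∧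
    (Submodule.span ℝ (symXH1Set d) ⊓ Submodule.span ℝ (xxTH1Set d) = ⊥) ∧
    Module.finrank ℝ
        ↥(Submodule.span ℝ (P1SymSet d) ⊔ Submodule.span ℝ (symXH1Set d)
          ⊔ Submodule.span ℝ (xxTH1Set d))
      = d * (d + 1) * (d + 3) / 2 :=
  sigma1pp_direct_sum_dim_general d
end
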